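/- Let n ≥ 3, u : ℝⁿ → ℝ positive and continuous, x ∈ ℝⁿ, and μ > 0. Suppose u_{x,λ}(y) ≤ u(y) for all |y−x| ≥ λ and all 0 < λ < μ, where u_{x,λ}(y) = (λ/|y−x|)^{n−2} u(x + λ²(y−x)/|y−x|²). If α := liminf_{|y|→∞} |y|^{n−2} u(y) is finite, then μ^{n−2} u(x) ≤ α. -/

import Mathlib

open Filter Topology

/-!
Multiplying the moving-sphere inequality `u_{x,λ}(y) ≤ u(y)` by `|y|^{n-2}` and letting
`|y| → ∞`, the left side tends to `λ^{n-2} u(x)`: the factor `|y| / |y - x|` tends to `1` and the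
reflected point `x + λ² (y - x) / |y - x|²` tends to `x`. Hence `λ^{n-2} u(x) ≤ α` for every
`λ < μ`, and `λ → μ` gives the claim.
-/

/-- The Kelvin transform `u_{x,λ}` of `u` in the sphere of centre `x` and radius `λ`, with
`k = n - 2` in dimension `n`. -/
noncomputable def kelvinTransform {E : Type*} [NormedAddCommGroup E] [NormedSpace ℝ E]
    (u : E → ℝ) (k : ℕ) (x : E) (l : ℝ) (y : E) : ℝ :=
  (l / ‖y - x‖) ^ k * u (x + (l ^ 2 / ‖y - x‖ ^ 2) • (y - x))

section Asymptotics

variable {E : Type*} [NormedAddCommGroup E] {F : Filter E}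

lemma tendsto_norm_sub_const_atTop (hF : Tendsto norm F atTop) (x : E) :
    Tendsto (fun y => ‖y - x‖) F atTop :=
  tendsto_atTop_mono (fun y => by linarith [norm_sub_norm_le y x])
    (tendsto_atTop_add_const_right _ (-‖x‖) hF)

lemma tendsto_norm_div_norm_sub_const (hF : Tendsto norm F atTop) (x : E) :
    Tendsto (fun y => ‖y‖ / ‖y - x‖) F (𝓝 1) := by
  have hd := tendsto_norm_sub_const_atTop hF x
  have hx : Tendsto (fun y => ‖x‖ / ‖y - x‖) F (𝓝 0) := tendsto_const_nhds.div_atTop hd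
  have hlo := hx.const_sub 1
  have hhi := hx.const_add 1
  rw [sub_zero] at hlo
  rw [add_zero] at hhi
  refine tendsto_of_tendsto_of_tendsto_of_le_of_le' hlo hhi ?_ ?_ <;>
  filter_upwards [hd.eventually_gt_atTop 0] with y hy
  · rw [one_sub_div hy.ne', div_le_div_iff_of_pos_right hy]
    linarith [norm_sub_le y x]
  · rw [one_add_div hy.ne', div_le_div_iff_of_pos_right hy]
    linarith [norm_le_norm_add_norm_sub' y x, norm_sub_rev x y]

variable [NormedSpace ℝ E]

lemma tendsto_div_norm_sq_smul_zero {α : Type*} {G : Filter α} {v : α → E}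
    (hv : Tendsto (fun a => ‖v a‖) G atTop) (c : ℝ) :
    Tendsto (fun a => (c / ‖v a‖ ^ 2) • v a) G (𝓝 0) := by
  have hnorm : ∀ v : E, ‖(c / ‖v‖ ^ 2) • v‖ = |c| / ‖v‖ := by
    intro v
    rcases eq_or_ne ‖v‖ 0 with hv | hv
    · simp [hv]
    · rw [norm_smul, norm_div, norm_pow, norm_norm, Real.norm_eq_abs]
      field_simp
  rw [tendsto_zero_iff_norm_tendsto_zero]
  simpa only [hnorm] using tendsto_const_nhds.div_atTop hv

end Asymptotics

lemma le_liminf_of_tendsto_of_eventually_le {α β : Type*} [CompleteLinearOrder β]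
    [TopologicalSpace β] [OrderTopology β] {F : Filter α} {f g : α → β} {c : β}
    (hg : Tendsto g F (𝓝 c)) (hgf : g ≤ᶠ[F] f) : c ≤ liminf f F := by
  rcases F.eq_or_neBot with rfl | _
  · simp
  · exact hg.liminf_eq ▸ liminf_le_liminf hgf

section Kelvin

variable {E : Type*} [NormedAddCommGroup E] [NormedSpace ℝ E] [ProperSpace E]
  {u : E → ℝ} {x : E}

lemma tendsto_norm_pow_mul_kelvinTransform (hu : ContinuousAt u x) (k : ℕ) (l : ℝ) :
    Tendsto (fun y => ‖y‖ ^ k * kelvinTransform u k x l y) (cocompact E) (𝓝 (l ^ k * u x)) := by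
  have hratio : Tendsto (fun y : E => ‖y‖ / ‖y - x‖ * l) (cocompact E) (𝓝 l) := by
    simpa using (tendsto_norm_div_norm_sub_const tendsto_norm_cocompact_atTop x).mul_const l
  have hreflect : Tendsto (fun y : E => x + (l ^ 2 / ‖y - x‖ ^ 2) • (y - x)) (cocompact E) (𝓝 x) := by
    simpa using tendsto_const_nhds.add <| (tendsto_div_norm_sq_smul_zero
      (tendsto_norm_sub_const_atTop tendsto_norm_cocompact_atTop x) (l ^ 2))
  refine ((hratio.pow k).mul (hu.tendsto.comp hreflect)).congr fun y => ?_
  simp only [kelvinTransform, Function.comp_apply, ← mul_assoc, ← mul_pow, mul_div, div_mul_eq_mul_div]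

lemma coe_le_liminf_norm_pow_mul_of_kelvinTransform_le (hu : ContinuousAt u x) {k : ℕ} {l : ℝ}
    (h : ∀ y, l ≤ ‖y - x‖ → kelvinTransform u k x l y ≤ u y) :
    ((l ^ k * u x : ℝ) : EReal) ≤
      liminf (fun y => ((‖y‖ ^ k * u y : ℝ) : EReal)) (cocompact E) := by
  refine le_liminf_of_tendsto_of_eventually_le
    (EReal.tendsto_coe.mpr (tendsto_norm_pow_mul_kelvinTransform hu k l)) ?_
  filter_upwards [(tendsto_norm_sub_const_atTop tendsto_norm_cocompact_atTop x).eventually_ge_atTop l]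
    with y hy
  exact EReal.coe_le_coe_iff.mpr (mul_le_mul_of_nonneg_left (h y hy) (by positivity))

end Kelvin

theorem stmt5_general {n : ℕ} (u : EuclideanSpace ℝ (Fin n) → ℝ)
    (hc : Continuous u)
    (x : EuclideanSpace ℝ (Fin n)) (μ : ℝ) (hμ : 0 < μ)
    (h : ∀ l : ℝ, 0 < l → l < μ →
      ∀ y : EuclideanSpace ℝ (Fin n), l ≤ ‖y - x‖ →
        (l / ‖y - x‖) ^ (n - 2) * u (x + (l ^ 2 / ‖y - x‖ ^ 2) • (y - x)) ≤ u y) :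
    ((μ ^ (n - 2) * u x : ℝ) : EReal) ≤
      liminf (fun y : EuclideanSpace ℝ (Fin n) =>
        ((‖y‖ ^ (n - 2) * u y : ℝ) : EReal)) (cocompact (EuclideanSpace ℝ (Fin n))) := by
  have hcont : Tendsto (fun l : ℝ => ((l ^ (n - 2) * u x : ℝ) : EReal)) (𝓝[<] μ)
      (𝓝 ((μ ^ (n - 2) * u x : ℝ) : EReal)) :=
    (continuous_coe_real_ereal.comp (by fun_prop)).continuousAt.tendsto.mono_left
      nhdsWithin_le_nhds
  refine le_of_tendsto hcont ?_
  filter_upwards [Ioo_mem_nhdsLT hμ] with l hl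
  exact coe_le_liminf_norm_pow_mul_of_kelvinTransform_le hc.continuousAt (h l hl.1 hl.2)

/-- If the moving sphere inequality `u_{x,λ} ≤ u` outside `B_λ(x)` holds for all
radii `0 < λ < μ`, and `α = liminf_{|y|→∞} |y|^{n-2} u(y)` is finite, then
`μ^{n-2} u(x) ≤ α`. (Liminf taken in `EReal` to express finiteness.) -/
theorem stmt5 {n : ℕ} (hn : 3 ≤ n) (u : EuclideanSpace ℝ (Fin n) → ℝ)
    (hc : Continuous u) (hpos : ∀ x, 0 < u x)
    (x : EuclideanSpace ℝ (Fin n)) (μ : ℝ) (hμ : 0 < μ)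
    (h : ∀ l : ℝ, 0 < l → l < μ →
      ∀ y : EuclideanSpace ℝ (Fin n), l ≤ ‖y - x‖ →
        (l / ‖y - x‖) ^ (n - 2) * u (x + (l ^ 2 / ‖y - x‖ ^ 2) • (y - x)) ≤ u y)
    (hfin : liminf (fun y : EuclideanSpace ℝ (Fin n) =>
        ((‖y‖ ^ (n - 2) * u y : ℝ) : EReal)) (cocompact (EuclideanSpace ℝ (Fin n))) ≠ ⊤) :
    ((μ ^ (n - 2) * u x : ℝ) : EReal) ≤
      liminf (fun y : EuclideanSpace ℝ (Fin n) =>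
        ((‖y‖ ^ (n - 2) * u y : ℝ) : EReal)) (cocompact (EuclideanSpace ℝ (Fin n))) :=
  stmt5_general u hc x μ hμ h
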